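/- arXiv:2404.00174 — 4 statements merged into one kernel-verified Lean document; each statement's English description precedes it below -/
import Mathlib

section
/- Let M be a separable complete metric space such that every countable complete metric space is Lipschitz-equivalent to a subspace of M (i.e., admits a bi-Lipschitz embedding into M). Then M is not purely 1-unrectifiable; that is, M contains a bi-Lipschitz copy of a compact subset of ℝ of positive Lebesgue measure. -/
/-!
Fix a dense sequence `q` in `M`. A list of indices into `q` codes an approximately
`K`-bi-Lipschitz map from the dyadic grid of level `m` into `M`, and a sequence of codes, each
refining the previous one, converges to a `K`-bi-Lipschitz copy of `[0, 1]` in `M`.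

To find such a sequence, let `t` be the tree of finite refining sequences of codes, each labelled
by its constant `k + 1` with `k : ℕ` (so that `t` is countable). If `t` has an infinite branch we
are done. Otherwise the countable space obtained by attaching the dyadic grid of level `|s|` to
every node `s` of `t` is complete, so it embeds into `M` with some constant `k + 1`. Sampling the
embedding at each node gives codes that refine each other along the edges of `t`, and feeding
these codes back into `t` produces an infinite refining sequence after all.
-/

open Metric Set Pointwise

noncomputable section

/-- `N` admits a bi-Lipschitz embedding into `M`, i.e. `N` is Lipschitz-equivalent to a
subspace of `M`. -/
def BiLipEmb (N : Type*) (M : Type*) [MetricSpace N] [MetricSpace M] : Prop :=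
  ∃ f : N → M, ∃ C₁ C₂ : ℝ, 0 < C₁ ∧
    (∀ u v : N, C₁ * dist u v ≤ dist (f u) (f v)) ∧
    (∀ u v : N, dist (f u) (f v) ≤ C₂ * dist u v)

open Filter Topology

section Chains

variable {α : Type*} {R : α → α → Prop}

theorem rel_succ_of_forall_isChain_map_range {x : ℕ → α}
    (hx : ∀ n, ((List.range n).map x).IsChain R) (n : ℕ) : R (x n) (x (n + 1)) :=
  (List.isChain_range_succ _ _).1 ((List.isChain_map x).1 (hx (n + 2))) n n.lt_succ_self

theorem exists_forall_rel_succ_of_isChain_append (F : List α → α)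
    (hF : ∀ l a, (l ++ [a]).IsChain R → R (F l) (F (l ++ [a]))) :
    ∃ y : ℕ → α, ∀ n, R (y n) (y (n + 1)) := by
  let l : ℕ → List α := fun n => Nat.rec [] (fun _ l => l ++ [F l]) n
  have hl : ∀ n, (l (n + 1)).IsChain R := by
    intro n
    induction n with
    | zero => exact List.isChain_singleton _
    | succ n ih =>
      change (l n ++ [F (l n)] ++ [F (l (n + 1))]).IsChain R
      rw [List.append_assoc, List.singleton_append, List.isChain_append_cons_cons]
      exact ⟨ih, hF _ _ ih, List.isChain_singleton _⟩
  exact ⟨fun n => F (l n), fun n => hF _ _ (hl n)⟩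

end Chains

def dyadic (m i : ℕ) : ℝ := i * (1 / 2) ^ m

lemma dyadic_injective (m : ℕ) : Function.Injective (dyadic m) := fun i j h => by
  simpa [dyadic] using h

lemma dyadic_succ_two_mul (m i : ℕ) : dyadic (m + 1) (2 * i) = dyadic m i := by
  simp only [dyadic, pow_succ]; push_cast; ring

lemma floor_mul_two_pow_le {x : ℝ} (hx : x ≤ 1) (m : ℕ) : ⌊x * 2 ^ m⌋₊ ≤ 2 ^ m :=
  Nat.floor_le_of_le (by push_cast; exact mul_le_of_le_one_left (by positivity) hx)

lemma abs_dyadic_floor_sub_le {x : ℝ} (hx : 0 ≤ x) (m : ℕ) :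
    |dyadic m ⌊x * 2 ^ m⌋₊ - x| ≤ (1 / 2) ^ m := by
  have h₀ : (0 : ℝ) < 2 ^ m := by positivity
  have h₁ := Nat.floor_le (mul_nonneg hx h₀.le)
  have h₂ := Nat.lt_floor_add_one (x * 2 ^ m)
  have : dyadic m ⌊x * 2 ^ m⌋₊ - x = (⌊x * 2 ^ m⌋₊ - x * 2 ^ m) * (1 / 2) ^ m := by
    simp only [dyadic, one_div, inv_pow]; field_simp
  rw [this, abs_mul, abs_of_pos (by positivity : (0 : ℝ) < (1 / 2) ^ m)]
  have : |(⌊x * 2 ^ m⌋₊ - x * 2 ^ m : ℝ)| ≤ 1 := abs_le.2 ⟨by linarith, by linarith⟩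
  exact mul_le_of_le_one_left (by positivity) this

/-- The point `(s, i)` is the grid point `dyadic |s| i` of `[0, 1]` in the copy attached to the
node `s` of `t`. -/
def DyadicTree {α : Type*} (t : Set (List α)) : Type _ :=
  {p : List α × ℕ // p.1 ∈ t ∧ p.2 ≤ 2 ^ p.1.length}

namespace DyadicTree

variable {α : Type*} {t : Set (List α)}

def node (p : DyadicTree t) : List α := p.1.1

def pos (p : DyadicTree t) : ℝ := dyadic p.node.length p.1.2

def code (p : DyadicTree t) : ℕ → Option α := fun n => p.node[n]?

instance [Countable α] : Countable (DyadicTree t) :=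
  inferInstanceAs (Countable {p : List α × ℕ // p.1 ∈ t ∧ p.2 ≤ 2 ^ p.1.length})

lemma node_eq_of_code_eq {p p' : DyadicTree t} (h : p.code = p'.code) : p.node = p'.node :=
  List.ext_getElem? (congrFun h)

attribute [local instance] PiNat.dist

/-- Nodes are compared by the ultrametric `2 ^ (-n)` of `PiNat`, where `n` is the length of their
longest common prefix, so that the nodes along a branch of `t` form a Cauchy sequence. -/
instance : MetricSpace (DyadicTree t) where
  dist p p' := |p.pos - p'.pos| + dist p.code p'.code
  dist_self p := by simp [PiNat.dist_self]
  dist_comm p p' := by simp only [abs_sub_comm, PiNat.dist_comm]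
  dist_triangle p p' p'' := by
    have := abs_sub_le p.pos p'.pos p''.pos
    have := PiNat.dist_triangle p.code p'.code p''.code
    linarith
  eq_of_dist_eq_zero {p p'} h := by
    have h₁ := abs_nonneg (p.pos - p'.pos)
    have h₂ := PiNat.dist_nonneg p.code p'.code
    have hnode := node_eq_of_code_eq (PiNat.eq_of_dist_eq_zero _ _ (by linarith))
    have hpos : p.pos = p'.pos := by
      rw [← sub_eq_zero, ← abs_eq_zero]; linarith
    rw [pos, pos, hnode] at hpos
    exact Subtype.ext (Prod.ext hnode (dyadic_injective _ hpos))

lemma dist_eq (p p' : DyadicTree t) : dist p p' = |p.pos - p'.pos| + dist p.code p'.code := rfl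

lemma dist_of_node_eq {p p' : DyadicTree t} (h : p.node = p'.node) :
    dist p p' = |p.pos - p'.pos| := by
  have : p.code = p'.code := by unfold code; rw [h]
  rw [dist_eq, this, PiNat.dist_self, add_zero]

lemma dist_le_of_prefix {p p' : DyadicTree t} (h : p'.node <+: p.node) :
    dist p p' ≤ |p.pos - p'.pos| + (1 / 2) ^ p'.node.length := by
  rw [dist_eq]
  gcongr
  refine PiNat.mem_cylinder_iff_dist_le.1 fun i hi => ?_
  simp only [code, List.prefix_iff_getElem?.1 h i hi, List.getElem?_eq_getElem hi]

lemma code_eq_of_dist_lt {p p' : DyadicTree t} {j : ℕ} (h : dist p p' < (1 / 2) ^ j) {i : ℕ}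
    (hi : i ≤ j) : p.code i = p'.code i :=
  PiNat.apply_eq_of_dist_lt ((le_add_of_nonneg_left (abs_nonneg _)).trans_lt h) hi

lemma eq_of_node_eq_of_dist_lt {p p' : DyadicTree t} (h : p.node = p'.node)
    (hd : dist p p' < (1 / 2) ^ p.node.length) : p = p' := by
  rw [dist_of_node_eq h, pos, pos, dyadic, dyadic, ← h, ← sub_mul, abs_mul,
    abs_of_pos (by positivity : (0 : ℝ) < (1 / 2) ^ p.node.length)] at hd
  have hlt : |(p.1.2 : ℤ) - p'.1.2| < 1 := by
    exact_mod_cast (mul_lt_iff_lt_one_left (by positivity)).1 hd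
  have := Int.abs_lt_one_iff.1 hlt
  exact Subtype.ext (Prod.ext h (by omega))

/-- Each letter of the nodes of a Cauchy sequence stabilises. If one of the limit letters is
`none`, the nodes themselves stabilise; otherwise the limit letters spell an infinite branch. -/
theorem exists_node_eq_of_cauchySeq (ht : ∀ s ∈ t, ∀ u, u <+: s → u ∈ t)
    (hwf : ∀ x : ℕ → α, ∃ n, (List.range n).map x ∉ t) {p : ℕ → DyadicTree t}
    (hp : CauchySeq p) : ∃ N, ∀ n ≥ N, (p n).node = (p N).node := by
  have hstab : ∀ j, ∃ N, ∀ n ≥ N, ∀ i ≤ j, (p n).code i = (p N).code i := by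
    intro j
    obtain ⟨N, hN⟩ := Metric.cauchySeq_iff.1 hp ((1 / 2) ^ j) (by positivity)
    exact ⟨N, fun n hn i hi => code_eq_of_dist_lt (hN n hn N le_rfl) hi⟩
  choose N hN using hstab
  set z : ℕ → Option α := fun j => (p (N j)).code j
  have hz : ∀ j, ∀ n ≥ N j, ∀ i ≤ j, (p n).code i = z i := by
    intro j n hn i hi
    rw [hN j n hn i hi, ← hN j (max (N i) (N j)) (le_max_right _ _) i hi,
      hN i _ (le_max_left _ _) i le_rfl]
  by_cases hnone : ∃ j, z j = none
  · obtain ⟨j, hj⟩ := hnone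
    have hlen : ∀ m ≥ N j, (p m).node.length ≤ j := fun m hm => by
      simpa [hj, code] using hz j m hm j le_rfl
    refine ⟨N j, fun n hn => node_eq_of_code_eq (funext fun i => ?_)⟩
    rcases le_or_gt i j with hi | hi
    · rw [hz j n hn i hi, hz j _ le_rfl i hi]
    · simp only [code, List.getElem?_eq_none ((hlen n hn).trans hi.le),
        List.getElem?_eq_none ((hlen _ le_rfl).trans hi.le)]
  · push Not at hnone
    choose x hx using fun j => Option.ne_none_iff_exists'.1 (hnone j)
    obtain ⟨n, hn⟩ := hwf x
    have hbranch : (List.range n).map x = (p (N n)).node.take n := by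
      refine List.ext_getElem? fun i => ?_
      rw [List.getElem?_take, List.getElem?_map]
      split_ifs with hi
      · rw [List.getElem?_range hi, Option.map_some, ← hx i, ← hz n _ le_rfl i hi.le]
        rfl
      · rw [List.getElem?_eq_none (by simpa using hi), Option.map_none]
    exact absurd (hbranch ▸ ht _ (p (N n)).2.1 _ (List.take_prefix n _)) hn

theorem completeSpace (ht : ∀ s ∈ t, ∀ u, u <+: s → u ∈ t)
    (hwf : ∀ x : ℕ → α, ∃ n, (List.range n).map x ∉ t) :
    CompleteSpace (DyadicTree t) := by
  refine Metric.complete_of_cauchySeq_tendsto fun p hp => ?_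
  obtain ⟨N₀, hN₀⟩ := exists_node_eq_of_cauchySeq ht hwf hp
  obtain ⟨N₁, hN₁⟩ := Metric.cauchySeq_iff.1 hp _
    (by positivity : (0 : ℝ) < (1 / 2) ^ (p N₀).node.length)
  refine ⟨p (max N₀ N₁),
    tendsto_atTop_of_eventually_const (i₀ := max N₀ N₁) fun n hn => ?_⟩
  have hnode : ∀ m ≥ max N₀ N₁, (p m).node = (p N₀).node := fun m hm =>
    hN₀ m (le_of_max_le_left hm)
  refine eq_of_node_eq_of_dist_lt ((hnode n hn).trans (hnode _ le_rfl).symm) ?_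
  rw [hnode n hn]
  exact hN₁ n (le_of_max_le_right hn) _ (le_max_right _ _)

end DyadicTree

theorem biLip_of_tendsto {X Y : Type*} [PseudoMetricSpace X] [PseudoMetricSpace Y]
    {u : ℕ → X → Y} {g : X → Y} {ε : ℕ → ℝ} {A B : ℝ}
    (hg : ∀ x, Tendsto (fun n => u n x) atTop (𝓝 (g x))) (hε : Tendsto ε atTop (𝓝 0))
    (hu : ∀ n x y, A * dist x y - ε n ≤ dist (u n x) (u n y) ∧
      dist (u n x) (u n y) ≤ B * dist x y + ε n) (x y : X) :
    A * dist x y ≤ dist (g x) (g y) ∧ dist (g x) (g y) ≤ B * dist x y := by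
  have hd := (hg x).dist (hg y)
  constructor
  · refine le_of_tendsto_of_tendsto' ?_ hd fun n => (hu n x y).1
    simpa using tendsto_const_nhds.sub hε
  · refine le_of_tendsto_of_tendsto' hd ?_ fun n => (hu n x y).2
    simpa using tendsto_const_nhds.add hε

lemma abs_abs_sub_abs_sub_le {a b x y δ : ℝ} (ha : |a - x| ≤ δ) (hb : |b - y| ≤ δ) :
    |(|a - b| - |x - y|)| ≤ 2 * δ :=
  calc |(|a - b| - |x - y|)| ≤ |(a - b) - (x - y)| := abs_abs_sub_abs_le_abs_sub _ _
    _ = |(a - x) - (b - y)| := by ring_nf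
    _ ≤ |a - x| + |b - y| := abs_sub _ _
    _ ≤ 2 * δ := by linarith

section Codes

variable {M : Type*} [MetricSpace M] (q : ℕ → M)

/-- A code `(m, v)` stands for the map `dyadic m i ↦ q (v.getD i 0)` on the grid of level `m`. -/
def IsApproxBiLip (K : ℝ) (c : ℕ × List ℕ) : Prop :=
  ∀ i ≤ 2 ^ c.1, ∀ j ≤ 2 ^ c.1,
    K⁻¹ * |dyadic c.1 i - dyadic c.1 j| - 2 * (1 / 2) ^ c.1 ≤
        dist (q (c.2.getD i 0)) (q (c.2.getD j 0)) ∧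
      dist (q (c.2.getD i 0)) (q (c.2.getD j 0)) ≤
        K * |dyadic c.1 i - dyadic c.1 j| + 2 * (1 / 2) ^ c.1

structure Refines (K : ℝ) (c' c : ℕ × List ℕ) : Prop where
  approx_fine : IsApproxBiLip q K c'
  approx_coarse : IsApproxBiLip q K c
  level_succ : c'.1 = c.1 + 1
  dist_le : ∀ i ≤ 2 ^ c.1,
    dist (q (c'.2.getD (2 * i) 0)) (q (c.2.getD i 0)) ≤ (K + 2) * (1 / 2) ^ c.1

def sample (c : ℕ × List ℕ) (x : ℝ) : M := q (c.2.getD ⌊x * 2 ^ c.1⌋₊ 0)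

variable {q} {K : ℝ}

theorem IsApproxBiLip.dist_sample {c : ℕ × List ℕ} (hc : IsApproxBiLip q K c) (hK : 1 ≤ K)
    {x y : ℝ} (hx : x ∈ Icc 0 1) (hy : y ∈ Icc 0 1) :
    K⁻¹ * |x - y| - 2 * (K + 1) * (1 / 2) ^ c.1 ≤ dist (sample q c x) (sample q c y) ∧
      dist (sample q c x) (sample q c y) ≤ K * |x - y| + 2 * (K + 1) * (1 / 2) ^ c.1 := by
  obtain ⟨hlo, hup⟩ := hc _ (floor_mul_two_pow_le hx.2 _) _ (floor_mul_two_pow_le hy.2 _)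
  have hgrid := abs_le.1 (abs_abs_sub_abs_sub_le (abs_dyadic_floor_sub_le hx.1 c.1)
    (abs_dyadic_floor_sub_le hy.1 c.1))
  have hδ : (0 : ℝ) ≤ (1 / 2) ^ c.1 := by positivity
  have hKinv : K⁻¹ ≤ K := (inv_le_one_of_one_le₀ hK).trans hK
  have := mul_le_mul_of_nonneg_left hgrid.1 (inv_nonneg.2 (zero_le_one.trans hK))
  have := mul_le_mul_of_nonneg_left hgrid.2 (zero_le_one.trans hK)
  have := mul_le_mul_of_nonneg_right hKinv hδ
  unfold sample
  constructor <;> linarith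

theorem Refines.dist_sample_le {m' m : ℕ} {v' v : List ℕ} (h : Refines q K (m', v') (m, v))
    (hK : 0 ≤ K) {x : ℝ} (hx : x ∈ Icc 0 1) :
    dist (sample q (m', v') x) (sample q (m, v) x) ≤ (3 * K + 3) * (1 / 2) ^ m := by
  obtain ⟨hfine, -, rfl, hcompat⟩ := h
  set j := ⌊x * 2 ^ m⌋₊
  set j' := ⌊x * 2 ^ (m + 1)⌋₊
  have hj : j ≤ 2 ^ m := floor_mul_two_pow_le hx.2 m
  have hj' : dist (q (v'.getD j' 0)) (q (v'.getD (2 * j) 0)) ≤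
      K * |dyadic (m + 1) j' - dyadic (m + 1) (2 * j)| + 2 * (1 / 2) ^ (m + 1) :=
    (hfine _ (floor_mul_two_pow_le hx.2 _) (2 * j) (show 2 * j ≤ 2 ^ (m + 1) by omega)).2
  have hgrid : |dyadic (m + 1) j' - dyadic (m + 1) (2 * j)| ≤
      (1 / 2) ^ (m + 1) + (1 / 2) ^ m := by
    rw [dyadic_succ_two_mul]
    calc _ ≤ |dyadic (m + 1) j' - x| + |x - dyadic m j| := abs_sub_le _ _ _
      _ ≤ _ := add_le_add (abs_dyadic_floor_sub_le hx.1 _)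
          (by rw [abs_sub_comm]; exact abs_dyadic_floor_sub_le hx.1 _)
  have hgridK := mul_le_mul_of_nonneg_left hgrid hK
  have hhalf : (1 / 2 : ℝ) ^ (m + 1) = (1 / 2) ^ m / 2 := by rw [pow_succ]; ring
  rw [hhalf] at hj' hgridK
  have := mul_nonneg hK (by positivity : (0 : ℝ) ≤ (1 / 2) ^ m)
  change dist (q (v'.getD j' 0)) (q (v.getD j 0)) ≤ _
  linarith [hcompat j hj, dist_triangle (q (v'.getD j' 0)) (q (v'.getD (2 * j) 0)) (q (v.getD j 0))]

theorem exists_biLip_Icc_of_refines [CompleteSpace M] (hK : 1 ≤ K) {d : ℕ → ℕ × List ℕ}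
    (hd : ∀ n, Refines q K (d (n + 1)) (d n)) :
    ∃ g : Icc (0 : ℝ) 1 → M, ∀ x y,
      K⁻¹ * dist x y ≤ dist (g x) (g y) ∧ dist (g x) (g y) ≤ K * dist x y := by
  have hlevel : ∀ n, (d n).1 = (d 0).1 + n := fun n => by
    induction n with
    | zero => rfl
    | succ n ih => rw [(hd n).level_succ, ih, add_assoc]
  have hstep : ∀ x : Icc (0 : ℝ) 1, ∀ n, dist (sample q (d n) x) (sample q (d (n + 1)) x) ≤
      (3 * K + 3) * (1 / 2) ^ (d 0).1 * (1 / 2) ^ n := by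
    intro x n
    rw [dist_comm, mul_assoc, ← pow_add, ← hlevel]
    exact (hd n).dist_sample_le (by linarith) x.2
  choose g hg using fun x => cauchySeq_tendsto_of_complete
    (cauchySeq_of_le_geometric _ _ (by norm_num) (hstep x))
  refine ⟨g, biLip_of_tendsto hg (ε := fun n => 2 * (K + 1) * (1 / 2) ^ (d n).1) ?_
    fun n x y => ?_⟩
  · have := (tendsto_pow_atTop_nhds_zero_of_lt_one (by norm_num)
      (by norm_num : (1 / 2 : ℝ) < 1)).const_mul (2 * (K + 1) * (1 / 2) ^ (d 0).1)
    rw [mul_zero] at this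
    refine this.congr fun n => ?_
    rw [hlevel n, pow_add, mul_assoc]
  · rw [Subtype.dist_eq, Real.dist_eq]
    exact (hd n).approx_coarse.dist_sample hK x.2 y.2

end Codes

section Sampling

variable {α : Type*} {t : Set (List α)} {M : Type*} [MetricSpace M] {q : ℕ → M} {K : ℝ}
  {f : DyadicTree t → M}

theorem isApproxBiLip_of_biLip
    (hf : ∀ p p', K⁻¹ * dist p p' ≤ dist (f p) (f p') ∧
      dist (f p) (f p') ≤ K * dist p p')
    {s : List α} (hs : s ∈ t) {v : List ℕ}
    (hv : ∀ i (hi : i ≤ 2 ^ s.length),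
      dist (q (v.getD i 0)) (f ⟨(s, i), hs, hi⟩) < (1 / 2) ^ s.length) :
    IsApproxBiLip q K (s.length, v) := by
  intro i hi j hj
  let p : DyadicTree t := ⟨(s, i), hs, hi⟩
  let p' : DyadicTree t := ⟨(s, j), hs, hj⟩
  have hpp' : dist p p' = |dyadic s.length i - dyadic s.length j| := DyadicTree.dist_of_node_eq rfl
  have := abs_le.1 (Real.dist_eq _ _ ▸
    dist_dist_dist_le (q (v.getD i 0)) (q (v.getD j 0)) (f p) (f p'))
  have := hv i hi
  have := hv j hj
  have := hf p p'
  rw [hpp'] at this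
  constructor <;> linarith

theorem dist_le_of_biLip (hK : 0 ≤ K) (hf : ∀ p p', dist (f p) (f p') ≤ K * dist p p')
    {s : List α} {a : α} (hs : s ∈ t) (hsa : s ++ [a] ∈ t) {v v' : List ℕ}
    (hv : ∀ i (hi : i ≤ 2 ^ s.length),
      dist (q (v.getD i 0)) (f ⟨(s, i), hs, hi⟩) < (1 / 2) ^ s.length)
    (hv' : ∀ i (hi : i ≤ 2 ^ (s ++ [a]).length),
      dist (q (v'.getD i 0)) (f ⟨(s ++ [a], i), hsa, hi⟩) < (1 / 2) ^ (s ++ [a]).length)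
    (i : ℕ) (hi : i ≤ 2 ^ s.length) :
    dist (q (v'.getD (2 * i) 0)) (q (v.getD i 0)) ≤ (K + 2) * (1 / 2) ^ s.length := by
  have hi' : 2 * i ≤ 2 ^ (s ++ [a]).length := by
    rw [List.length_append, List.length_singleton, pow_succ]; omega
  let p : DyadicTree t := ⟨(s ++ [a], 2 * i), hsa, hi'⟩
  let p' : DyadicTree t := ⟨(s, i), hs, hi⟩
  have hpp' : dist p p' ≤ (1 / 2) ^ s.length := by
    have hpos : p.pos = p'.pos := by
      change dyadic (s ++ [a]).length (2 * i) = dyadic s.length i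
      rw [List.length_append, List.length_singleton, dyadic_succ_two_mul]
    have := DyadicTree.dist_le_of_prefix (p := p) (p' := p') (List.prefix_append s [a])
    rwa [hpos, sub_self, abs_zero, zero_add] at this
  have hδ : (1 / 2 : ℝ) ^ (s ++ [a]).length ≤ (1 / 2) ^ s.length :=
    pow_le_pow_of_le_one (by norm_num) (by norm_num) (by simp)
  have := hv' _ hi'
  have := dist_comm (q (v.getD i 0)) (f p') ▸ hv i hi
  have := mul_le_mul_of_nonneg_left hpp' hK
  have := hf p p'
  linarith [dist_triangle4 (q (v'.getD (2 * i) 0)) (f p) (f p') (q (v.getD i 0))]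

theorem exists_refines_of_biLip (hq : DenseRange q) (hK : 0 ≤ K)
    (hf : ∀ p p', K⁻¹ * dist p p' ≤ dist (f p) (f p') ∧
      dist (f p) (f p') ≤ K * dist p p') :
    ∃ c : List α → ℕ × List ℕ,
      ∀ s a, s ∈ t → s ++ [a] ∈ t → Refines q K (c (s ++ [a])) (c s) := by
  have hsel : ∀ (s : List α) (i : ℕ), ∃ n, ∀ h : s ∈ t ∧ i ≤ 2 ^ s.length,
      dist (q n) (f ⟨(s, i), h⟩) < (1 / 2) ^ s.length := by
    intro s i
    by_cases h : s ∈ t ∧ i ≤ 2 ^ s.length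
    · obtain ⟨n, hn⟩ := hq.exists_dist_lt (f ⟨(s, i), h⟩)
        (by positivity : (0 : ℝ) < (1 / 2) ^ s.length)
      exact ⟨n, fun _ => dist_comm (q n) _ ▸ hn⟩
    · exact ⟨0, fun h' => absurd h' h⟩
  choose sel hsel using hsel
  let c : List α → ℕ × List ℕ :=
    fun s => (s.length, (List.range (2 ^ s.length + 1)).map (sel s))
  have hc : ∀ s (hs : s ∈ t) i (hi : i ≤ 2 ^ s.length),
      dist (q ((c s).2.getD i 0)) (f ⟨(s, i), hs, hi⟩) < (1 / 2) ^ s.length := by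
    intro s hs i hi
    simpa [c, Nat.lt_succ_iff.2 hi] using hsel s i ⟨hs, hi⟩
  exact ⟨c, fun s a hs hsa => ⟨isApproxBiLip_of_biLip hf hsa (hc _ hsa),
    isApproxBiLip_of_biLip hf hs (hc s hs), by simp [c],
    dist_le_of_biLip hK (fun p p' => (hf p p').2) hs hsa (hc s hs) (hc _ hsa)⟩⟩

end Sampling

theorem BiLipEmb.exists_nat_bound {N M : Type*} [MetricSpace N] [MetricSpace M]
    (h : BiLipEmb N M) :
    ∃ f : N → M, ∃ k : ℕ, ∀ u v, ((k : ℝ) + 1)⁻¹ * dist u v ≤ dist (f u) (f v) ∧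
      dist (f u) (f v) ≤ (k + 1) * dist u v := by
  obtain ⟨f, C₁, C₂, hC₁, hf₁, hf₂⟩ := h
  obtain ⟨k, hk⟩ := exists_nat_ge (max C₂ C₁⁻¹)
  have hk₁ : ((k : ℝ) + 1)⁻¹ ≤ C₁ :=
    inv_le_of_inv_le₀ hC₁ (by linarith [le_max_right C₂ C₁⁻¹])
  have hk₂ : C₂ ≤ k + 1 := by linarith [le_max_left C₂ C₁⁻¹]
  exact ⟨f, k, fun u v => ⟨(mul_le_mul_of_nonneg_right hk₁ dist_nonneg).trans (hf₁ u v),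
    (hf₂ u v).trans (mul_le_mul_of_nonneg_right hk₂ dist_nonneg)⟩⟩

/-- **Corollary 1.3.** A separable complete metric space that is Lipschitz-universal for all
countable complete metric spaces is not purely 1-unrectifiable: it contains a bi-Lipschitz
copy of a compact subset of `ℝ` of positive Lebesgue measure. -/
theorem universal_not_purely_unrectifiable (M : Type) [MetricSpace M]
    [TopologicalSpace.SeparableSpace M] [CompleteSpace M]
    (huniv : ∀ (N : Type) [MetricSpace N], Countable N → CompleteSpace N → BiLipEmb N M) :
    ∃ K : Set ℝ, IsCompact K ∧ 0 < MeasureTheory.volume K ∧ BiLipEmb ↥K M := by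
  have : Nonempty M := let ⟨f, _⟩ := huniv PUnit inferInstance inferInstance; ⟨f ⟨⟩⟩
  obtain ⟨q, hq⟩ := TopologicalSpace.exists_dense_seq M
  suffices ∃ k : ℕ, ∃ d : ℕ → ℕ × List ℕ,
      ∀ n, Refines q (k + 1) (d (n + 1)) (d n) by
    obtain ⟨k, d, hd⟩ := this
    obtain ⟨g, hg⟩ := exists_biLip_Icc_of_refines (by simp) hd
    exact ⟨Icc 0 1, isCompact_Icc, by simp, g, _, _, by positivity, fun x y => (hg x y).1,
      fun x y => (hg x y).2⟩
  let R : ℕ × (ℕ × List ℕ) → ℕ × (ℕ × List ℕ) → Prop :=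
    fun a b => a.1 = b.1 ∧ Refines q (a.1 + 1) b.2 a.2
  suffices ∃ x : ℕ → ℕ × (ℕ × List ℕ), ∀ n, R (x n) (x (n + 1)) by
    obtain ⟨x, hx⟩ := this
    have hlabel : ∀ n, (x n).1 = (x 0).1 := fun n => by
      induction n with
      | zero => rfl
      | succ n ih => rw [← (hx n).1, ih]
    exact ⟨(x 0).1, fun n => (x n).2, fun n => hlabel n ▸ (hx n).2⟩
  let t : Set (List (ℕ × (ℕ × List ℕ))) := {l | l.IsChain R}
  by_cases hbranch : ∃ x : ℕ → ℕ × (ℕ × List ℕ), ∀ n, (List.range n).map x ∈ t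
  · obtain ⟨x, hx⟩ := hbranch
    exact ⟨x, rel_succ_of_forall_isChain_map_range hx⟩
  push Not at hbranch
  have := DyadicTree.completeSpace (fun s hs u hu => List.IsChain.prefix hs hu) hbranch
  obtain ⟨f, k, hf⟩ := (huniv (DyadicTree t) inferInstance this).exists_nat_bound
  obtain ⟨c, hc⟩ := exists_refines_of_biLip hq (by positivity) hf
  exact exists_forall_rel_succ_of_isChain_append (fun l => (k, c l)) fun l a h =>
    ⟨rfl, hc l a (h.prefix (List.prefix_append _ _)) h⟩

end
end

section
/- Let X be a Banach space such that for every ε > 0 there exists an ordinal γ with σ_ε^γ(B_X) = ∅ (i.e., Φ(X) < ∞). Then there exists an ordinal α such that Φ(X) = ω^α, where ω is the first infinite ordinal. -/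
/-!
The set of ordinals below `Φ(X)` is closed under addition, so `Φ(X)` is additively principal,
hence a power of `ω` (it is nonzero since the unit ball is nonempty). Closure under addition: if
`x ∈ σ_ε^β(B_X)` and `y ∈ σ_ε^γ(B_X)`, then translating by `x` puts `x + B_X` inside
`σ_ε^β(2B_X)`, so `x + y ∈ σ_ε^γ(σ_ε^β(2B_X)) = σ_ε^{β+γ}(2B_X)`, and rescaling by `1/2` gives
`(x + y)/2 ∈ σ_{ε/2}^{β+γ}(B_X)`. Translations and dilations are weak homeomorphisms scaling
diameters, so they commute with the derivation up to the factor on `ε`.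
-/

open Metric Set Pointwise

noncomputable section

/-- The weak topology on a normed space `X`: the initial topology with respect to all
continuous linear functionals. -/
noncomputable def weakTop (X : Type*) [NormedAddCommGroup X] [NormedSpace ℝ X] :
    TopologicalSpace X :=
  ⨅ f : X →L[ℝ] ℝ, TopologicalSpace.induced (⇑f) inferInstance

/-- A set is weakly open if it is open for the weak topology. -/
def IsWeaklyOpen {X : Type*} [NormedAddCommGroup X] [NormedSpace ℝ X] (V : Set X) : Prop :=
  @IsOpen X (weakTop X) V

/-- The derived set `σ_ε(K)`: remove from `K` the union of all weakly open sets `V` whose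
trace on `K` has (norm) diameter `< ε`. -/
noncomputable def dSet {X : Type*} [NormedAddCommGroup X] [NormedSpace ℝ X] (ε : ℝ)
    (K : Set X) : Set X :=
  K \ ⋃₀ {V : Set X | IsWeaklyOpen V ∧ Metric.diam (V ∩ K) < ε}

/-- The transfinite iterates `σ_ε^α(K)`: `σ_ε^0(K) = K`, `σ_ε^{α+1}(K) = σ_ε(σ_ε^α(K))`,
and `σ_ε^α(K) = ⋂_{β<α} σ_ε^β(K)` for `α` a limit ordinal. -/
noncomputable def dIter {X : Type*} [NormedAddCommGroup X] [NormedSpace ℝ X] (ε : ℝ)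
    (K : Set X) (α : Ordinal.{0}) : Set X :=
  Ordinal.limitRecOn α K (fun _ ih => dSet ε ih)
    (fun o _ ih => ⋂ (β : Ordinal.{0}) (h : β < o), ih β h)

/-- `Φ(X, ε)`: the least ordinal `α` with `σ_ε^α(B_X) = ∅` (junk value `0` if there is none). -/
noncomputable def PhiEps (X : Type*) [NormedAddCommGroup X] [NormedSpace ℝ X] (ε : ℝ) :
    Ordinal.{0} :=
  sInf {γ : Ordinal.{0} | dIter ε (Metric.closedBall (0 : X) 1) γ = ∅}

/-- `Φ(X, ε)` is well defined, i.e. some derived iterate of the unit ball is empty. -/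
def PhiDefinedAt (X : Type*) [NormedAddCommGroup X] [NormedSpace ℝ X] (ε : ℝ) : Prop :=
  ∃ γ : Ordinal.{0}, dIter ε (Metric.closedBall (0 : X) 1) γ = ∅

/-- `Φ(X) < ∞`, i.e. `Φ(X, ε)` is well defined for every `ε > 0`. -/
def PhiDefined (X : Type*) [NormedAddCommGroup X] [NormedSpace ℝ X] : Prop :=
  ∀ ε : ℝ, 0 < ε → PhiDefinedAt X ε

/-- The weak-fragmentability index `Φ(X) = sup_{ε > 0} Φ(X, ε)`. -/
noncomputable def Phi (X : Type*) [NormedAddCommGroup X] [NormedSpace ℝ X] : Ordinal.{0} :=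
  ⨆ ε : {ε : ℝ // 0 < ε}, PhiEps X ε.1

namespace WeakFragmentability

open Bornology Ordinal

variable {X : Type*} [NormedAddCommGroup X] [NormedSpace ℝ X]

lemma continuous_weakTop_affine (c : ℝ) (z : X) :
    @Continuous X X (weakTop X) (weakTop X) (fun y => z + c • y) := by
  refine continuous_iInf_rng.mpr fun f => continuous_induced_rng.mpr ?_
  have hcomp : ⇑f ∘ (fun y => z + c • y) = (fun r => f z + c * r) ∘ ⇑f := by
    funext y
    simp
  rw [hcomp]
  have hf : @Continuous X ℝ (weakTop X) _ f := continuous_iff_le_induced.2 (iInf_le _ f)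
  exact @Continuous.comp X ℝ ℝ (weakTop X) _ _ _ _ (by fun_prop) hf

lemma isWeaklyOpen_preimage_affine (c : ℝ) (z : X) {V : Set X} (hV : IsWeaklyOpen V) :
    IsWeaklyOpen ((fun y => z + c • y) ⁻¹' V) :=
  @Continuous.isOpen_preimage X X (weakTop X) (weakTop X) _ (continuous_weakTop_affine c z) V hV

lemma isBounded_affine_image (c : ℝ) (z : X) {K : Set X} (hK : IsBounded K) :
    IsBounded ((fun y => z + c • y) '' K) :=
  ((hK.smul₀ c).vadd z).subset
    (by rintro _ ⟨y, hy, rfl⟩; exact vadd_mem_vadd_set (smul_mem_smul_set hy))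

lemma diam_affine_image (c : ℝ) (z : X) (S : Set X) :
    diam ((fun y => z + c • y) '' S) = |c| * diam S := by
  rw [show (fun y : X => z + c • y) = (z + ·) ∘ (c • ·) from rfl, image_comp, image_smul,
    (isometry_add_left z).diam_image, diam_smul₀, Real.norm_eq_abs]

lemma mem_dSet {ε : ℝ} {A : Set X} {x : X} :
    x ∈ dSet ε A ↔ x ∈ A ∧ ∀ V, IsWeaklyOpen V → x ∈ V → ε ≤ diam (V ∩ A) := by
  simp only [dSet, mem_sdiff, mem_sUnion, mem_ofPred_eq, not_exists, not_and]
  exact and_congr_right fun _ => forall_congr' fun V =>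
    ⟨fun h hV hxV => not_lt.1 fun hd => h ⟨hV, hd⟩ hxV, fun h hV hxV => (h hV.1 hxV).not_gt hV.2⟩

lemma dIter_zero (ε : ℝ) (K : Set X) : dIter ε K 0 = K :=
  limitRecOn_zero _ _ _

lemma dIter_add_one (ε : ℝ) (K : Set X) (α : Ordinal) :
    dIter ε K (α + 1) = dSet ε (dIter ε K α) :=
  limitRecOn_add_one _ _ _ _

lemma dIter_limit (ε : ℝ) (K : Set X) {α : Ordinal} (hα : Order.IsSuccLimit α) :
    dIter ε K α = ⋂ β < α, dIter ε K β :=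
  limitRecOn_limit _ _ _ _ hα

lemma dIter_antitone (ε : ℝ) (K : Set X) : Antitone (dIter ε K) := by
  intro β α hβα
  induction α using limitRecOn with
  | zero => rw [nonpos_iff_eq_zero.1 hβα]
  | add_one α ih =>
    rcases hβα.eq_or_lt with rfl | hlt
    · rfl
    · rw [dIter_add_one]
      exact sdiff_subset.trans (ih (Order.lt_add_one_iff.1 hlt))
  | limit α hα _ =>
    rcases hβα.eq_or_lt with rfl | hlt
    · rfl
    · rw [dIter_limit ε K hα]
      exact biInter_subset_of_mem hlt

lemma dIter_subset (ε : ℝ) (K : Set X) (α : Ordinal) : dIter ε K α ⊆ K := by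
  simpa only [dIter_zero] using dIter_antitone ε K (zero_le (a := α))

lemma dIter_mono {ε ε' : ℝ} (hε : ε ≤ ε') {K K' : Set X} (hK : K ⊆ K')
    (hK' : IsBounded K') (α : Ordinal) : dIter ε' K α ⊆ dIter ε K' α := by
  induction α using limitRecOn with
  | zero => simpa only [dIter_zero] using hK
  | add_one α ih =>
    simp only [dIter_add_one, subset_def, mem_dSet]
    refine fun x hx => ⟨ih hx.1, fun V hV hxV => ?_⟩
    calc ε ≤ ε' := hε
      _ ≤ diam (V ∩ dIter ε' K α) := hx.2 V hV hxV
      _ ≤ diam (V ∩ dIter ε K' α) :=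
        diam_mono (inter_subset_inter_right V ih)
          (hK'.subset (inter_subset_right.trans (dIter_subset _ _ _)))
  | limit α hα ih =>
    rw [dIter_limit _ _ hα, dIter_limit _ _ hα]
    exact iInter₂_mono ih

lemma affine_mem_dIter_image (ε c : ℝ) (z : X) {K : Set X} (hK : IsBounded K)
    (α : Ordinal) {x : X} (hx : x ∈ dIter ε K α) :
    z + c • x ∈ dIter (|c| * ε) ((fun y => z + c • y) '' K) α := by
  induction α using limitRecOn generalizing x with
  | zero =>
    rw [dIter_zero] at hx ⊢
    exact mem_image_of_mem _ hx
  | add_one α ih =>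
    rw [dIter_add_one, mem_dSet] at hx ⊢
    refine ⟨ih hx.1, fun V hV hxV => ?_⟩
    have hpre := hx.2 _ (isWeaklyOpen_preimage_affine c z hV) hxV
    have himage : (fun y => z + c • y) '' ((fun y => z + c • y) ⁻¹' V ∩ dIter ε K α) ⊆
        V ∩ dIter (|c| * ε) ((fun y => z + c • y) '' K) α := by
      rintro _ ⟨y, ⟨hyV, hy⟩, rfl⟩
      exact ⟨hyV, ih hy⟩
    calc |c| * ε ≤ |c| * diam ((fun y => z + c • y) ⁻¹' V ∩ dIter ε K α) :=
          mul_le_mul_of_nonneg_left hpre (abs_nonneg c)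
      _ = diam ((fun y => z + c • y) '' ((fun y => z + c • y) ⁻¹' V ∩ dIter ε K α)) :=
          (diam_affine_image c z _).symm
      _ ≤ _ := diam_mono himage
          ((isBounded_affine_image c z hK).subset (inter_subset_right.trans (dIter_subset _ _ _)))
  | limit α hα ih =>
    rw [dIter_limit _ _ hα, mem_iInter₂] at hx ⊢
    exact fun β hβ => ih β hβ (hx β hβ)

lemma dIter_add (ε : ℝ) (K : Set X) (γ β : Ordinal) :
    dIter ε K (γ + β) = dIter ε (dIter ε K γ) β := by
  induction β using limitRecOn with
  | zero => rw [add_zero, dIter_zero]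
  | add_one β ih => rw [← add_assoc, dIter_add_one, dIter_add_one, ih]
  | limit β hβ ih =>
    rw [dIter_limit _ _ (isSuccLimit_add γ hβ), dIter_limit _ _ hβ]
    refine Subset.antisymm (iInter₂_mono' fun b hb => ⟨γ + b, add_lt_add_right hb γ, ?_⟩)
      (subset_iInter₂ fun d hd => ?_)
    · exact (ih b hb).subset
    · have hdγ : d - γ < β := sub_lt_of_lt_add hd hβ.bot_lt
      calc ⋂ b < β, dIter ε (dIter ε K γ) b ⊆ dIter ε (dIter ε K γ) (d - γ) :=
            biInter_subset_of_mem hdγ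
        _ = dIter ε K (γ + (d - γ)) := (ih _ hdγ).symm
        _ ⊆ dIter ε K d := dIter_antitone ε K (le_add_sub d γ)

lemma add_mem_dIter {ε : ℝ} {K L : Set X} {α : Ordinal} {z w : X}
    (hK : IsBounded K) (hL : IsBounded L) (hKL : (z + ·) '' K ⊆ L)
    (hw : w ∈ dIter ε K α) : z + w ∈ dIter ε L α := by
  have := affine_mem_dIter_image ε 1 z hK α hw
  simp only [one_smul, abs_one, one_mul] at this
  exact dIter_mono le_rfl hKL hL α this

lemma smul_mem_dIter {ε c : ℝ} {K L : Set X} {α : Ordinal} {w : X}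
    (hK : IsBounded K) (hL : IsBounded L) (hKL : c • K ⊆ L)
    (hw : w ∈ dIter ε K α) : c • w ∈ dIter (|c| * ε) L α := by
  have := affine_mem_dIter_image ε c 0 hK α hw
  simp only [zero_add] at this
  exact dIter_mono le_rfl (by rwa [image_smul]) hL α this

lemma two_inv_smul_add_mem_dIter {ε : ℝ} {β γ : Ordinal} {x y : X}
    (hx : x ∈ dIter ε (closedBall 0 1) β) (hy : y ∈ dIter ε (closedBall 0 1) γ) :
    (2⁻¹ : ℝ) • (x + y) ∈ dIter (ε / 2) (closedBall (0 : X) 1) (β + γ) := by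
  have hball2 : IsBounded (closedBall (0 : X) 2) := isBounded_closedBall
  have hxball : (x + ·) '' closedBall 0 1 ⊆ dIter ε (closedBall 0 2) β := by
    refine image_subset_iff.2 fun w hw => ?_
    rw [mem_preimage, add_comm]
    refine add_mem_dIter isBounded_closedBall hball2 ?_ hx
    rintro _ ⟨u, hu, rfl⟩
    rw [mem_closedBall_zero_iff] at hw hu ⊢
    linarith [norm_add_le w u]
  have hxy : x + y ∈ dIter ε (closedBall 0 2) (β + γ) := by
    rw [dIter_add]
    exact add_mem_dIter isBounded_closedBall (hball2.subset (dIter_subset _ _ _)) hxball hy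
  have hhalf : (2⁻¹ : ℝ) • closedBall (0 : X) 2 ⊆ closedBall 0 1 := by
    rw [_root_.smul_closedBall _ _ zero_le_two, smul_zero]
    norm_num
  simpa only [abs_of_pos (by norm_num : (0 : ℝ) < 2⁻¹), inv_mul_eq_div] using
    smul_mem_dIter hball2 isBounded_closedBall hhalf hxy

lemma dIter_nonempty_of_lt_phiEps {ε : ℝ} {α : Ordinal} (hα : α < PhiEps X ε) :
    (dIter ε (closedBall (0 : X) 1) α).Nonempty :=
  nonempty_iff_ne_empty.2 fun hempty =>
    (csInf_le' (s := {γ | dIter ε (closedBall (0 : X) 1) γ = ∅}) hempty).not_gt hα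

lemma lt_phiEps_of_dIter_nonempty {ε : ℝ} (hε : PhiDefinedAt X ε) {α : Ordinal}
    (hne : (dIter ε (closedBall (0 : X) 1) α).Nonempty) : α < PhiEps X ε := by
  by_contra! hle
  have hempty : dIter ε (closedBall (0 : X) 1) (PhiEps X ε) = ∅ := csInf_mem hε
  exact hne.ne_empty (subset_empty_iff.1 (hempty ▸ dIter_antitone ε _ hle))

lemma phiEps_le_phi {ε : ℝ} (hε : 0 < ε) : PhiEps X ε ≤ Phi X :=
  Ordinal.le_iSup (fun ε : {ε : ℝ // 0 < ε} => PhiEps X ε.1) ⟨ε, hε⟩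

lemma lt_phi_iff {β : Ordinal} : β < Phi X ↔ ∃ ε : {ε : ℝ // 0 < ε}, β < PhiEps X ε.1 :=
  Ordinal.lt_iSup_iff

lemma phi_pos (h : PhiDefined X) : 0 < Phi X := by
  refine (lt_phiEps_of_dIter_nonempty (h 1 one_pos) ?_).trans_le (phiEps_le_phi one_pos)
  rw [dIter_zero]
  exact nonempty_closedBall.2 zero_le_one

lemma isPrincipal_add_phi (h : PhiDefined X) : IsPrincipal (· + ·) (Phi X) := by
  intro β γ hβ hγ
  obtain ⟨⟨ε₁, hε₁⟩, hβ₁⟩ := lt_phi_iff.1 hβ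
  obtain ⟨⟨ε₂, hε₂⟩, hγ₂⟩ := lt_phi_iff.1 hγ
  have hε : 0 < min ε₁ ε₂ / 2 := by positivity
  obtain ⟨x, hx⟩ := dIter_nonempty_of_lt_phiEps hβ₁
  obtain ⟨y, hy⟩ := dIter_nonempty_of_lt_phiEps hγ₂
  have hxy := two_inv_smul_add_mem_dIter
    (dIter_mono (min_le_left ε₁ ε₂) subset_rfl isBounded_closedBall β hx)
    (dIter_mono (min_le_right ε₁ ε₂) subset_rfl isBounded_closedBall γ hy)
  exact (lt_phiEps_of_dIter_nonempty (h _ hε) ⟨_, hxy⟩).trans_le (phiEps_le_phi hε)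

end WeakFragmentability

theorem phi_eq_omega_opow_general (X : Type*) [NormedAddCommGroup X] [NormedSpace ℝ X]
    (h : PhiDefined X) :
    ∃ a : Ordinal.{0}, Phi X = Ordinal.omega0 ^ a := by
  obtain ⟨a, ha⟩ := (Ordinal.isPrincipal_add_iff_zero_or_omega0_opow.1
    (WeakFragmentability.isPrincipal_add_phi h)).resolve_left
    (WeakFragmentability.phi_pos h).ne'
  exact ⟨a, ha.symm⟩

/-- **Proposition 2.2.** If the weak-fragmentability index of a Banach space `X` is well
defined, then it is of the form `ω^α` for some ordinal `α`. -/
theorem phi_eq_omega_opow (X : Type*) [NormedAddCommGroup X] [NormedSpace ℝ X]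
    [CompleteSpace X] (h : PhiDefined X) :
    ∃ a : Ordinal.{0}, Phi X = Ordinal.omega0 ^ a :=
  phi_eq_omega_opow_general X h

end
end

section
/- Let X be a Banach space. For every ordinal α and every ε > 0, one has the inclusion (1/2)·σ_ε^α(B_X) + (1/2)·B_X ⊆ σ_{ε/2}^α(B_X). -/
open Metric Set Pointwise

noncomputable section

lemma dIter_zero {X : Type*} [NormedAddCommGroup X] [NormedSpace ℝ X] (ε : ℝ) (K : Set X) :
    dIter ε K 0 = K :=
  Ordinal.limitRecOn_zero _ _ _

lemma dIter_succ {X : Type*} [NormedAddCommGroup X] [NormedSpace ℝ X] (ε : ℝ) (K : Set X)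
    (α : Ordinal.{0}) : dIter ε K (Order.succ α) = dSet ε (dIter ε K α) :=
  Ordinal.limitRecOn_succ _ _ _ _

lemma dIter_limit {X : Type*} [NormedAddCommGroup X] [NormedSpace ℝ X] (ε : ℝ) (K : Set X)
    {α : Ordinal.{0}} (hα : Order.IsSuccLimit α) :
    dIter ε K α = ⋂ (β : Ordinal.{0}) (_ : β < α), dIter ε K β :=
  Ordinal.limitRecOn_limit _ _ _ _ hα

lemma dIter_subset {X : Type*} [NormedAddCommGroup X] [NormedSpace ℝ X] (ε : ℝ) (K : Set X)
    (α : Ordinal.{0}) : dIter ε K α ⊆ K := by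
  induction α using Ordinal.limitRecOn with
  | zero => rw [dIter_zero]
  | add_one β ihb => rw [Ordinal.add_one_eq_succ, dIter_succ]; exact Set.diff_subset.trans ihb
  | limit β hβ _ =>
    rw [dIter_limit _ _ hβ]
    intro x hx
    have := Set.mem_iInter₂.mp hx 0 hβ.pos
    rwa [dIter_zero] at this

lemma weaklyContinuous_half_add {X : Type*} [NormedAddCommGroup X] [NormedSpace ℝ X] (y : X) :
    @Continuous X X (weakTop X) (weakTop X) (fun w => (2⁻¹ : ℝ) • w + (2⁻¹ : ℝ) • y) := by
  have key : ∀ f : X →L[ℝ] ℝ, @Continuous X ℝ (weakTop X) _ ⇑f := by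
    intro f
    rw [weakTop]
    exact continuous_iInf_dom (i := f) continuous_induced_dom
  rw [weakTop, continuous_iInf_rng]
  intro f
  rw [continuous_induced_rng]
  have heq : (⇑f ∘ fun w => (2⁻¹ : ℝ) • w + (2⁻¹ : ℝ) • y) =
      (fun t : ℝ => (2⁻¹ : ℝ) * t + (2⁻¹ : ℝ) * f y) ∘ ⇑f := by
    ext w; simp [map_add, map_smul]
  rw [heq]
  exact @Continuous.comp X ℝ ℝ (weakTop X) _ _ _ _
    ((continuous_const.mul continuous_id).add continuous_const) (key f)

/-- **Fact 2.3.** For every ordinal `α` and every `ε > 0`,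
`(1/2)·σ_ε^α(B_X) + (1/2)·B_X ⊆ σ_{ε/2}^α(B_X)`. -/
theorem half_dIter_add_half_ball_subset (X : Type*) [NormedAddCommGroup X]
    [NormedSpace ℝ X] [CompleteSpace X] (a : Ordinal.{0}) (ε : ℝ) (hε : 0 < ε) :
    (2⁻¹ : ℝ) • dIter ε (Metric.closedBall (0 : X) 1) a +
        (2⁻¹ : ℝ) • Metric.closedBall (0 : X) 1 ⊆
      dIter (ε / 2) (Metric.closedBall (0 : X) 1) a := by
  induction a using Ordinal.limitRecOn with
  | zero =>
    rw [dIter_zero, dIter_zero]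
    rintro z ⟨_, ⟨x, hx, rfl⟩, _, ⟨y, hy, rfl⟩, rfl⟩
    exact (convex_closedBall (0 : X) 1) hx hy (by norm_num) (by norm_num) (by norm_num)
  | add_one α ih =>
    rw [Ordinal.add_one_eq_succ, dIter_succ, dIter_succ]
    rintro z ⟨_, ⟨x, hx, rfl⟩, _, ⟨y, hy, rfl⟩, rfl⟩
    have hx' : x ∈ dIter ε (Metric.closedBall (0 : X) 1) α := hx.1
    constructor
    · exact ih ⟨_, ⟨x, hx', rfl⟩, _, ⟨y, hy, rfl⟩, rfl⟩
    · rintro ⟨V, ⟨hVopen, hVdiam⟩, hzV⟩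
      set h : X → X := fun w => (2⁻¹ : ℝ) • w + (2⁻¹ : ℝ) • y with hh
      set W : Set X := h ⁻¹' V with hW
      have hWopen : IsWeaklyOpen W :=
        @IsOpen.preimage X X (weakTop X) (weakTop X) h (weaklyContinuous_half_add y) V hVopen
      have hWdiam : Metric.diam (W ∩ dIter ε (Metric.closedBall (0 : X) 1) α) < ε := by
        have hbound : ∀ w₁ ∈ W ∩ dIter ε (Metric.closedBall (0 : X) 1) α,
            ∀ w₂ ∈ W ∩ dIter ε (Metric.closedBall (0 : X) 1) α,
            dist w₁ w₂ ≤ 2 * Metric.diam (V ∩ dIter (ε / 2) (Metric.closedBall (0 : X) 1) α) := by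
          rintro w₁ ⟨hw₁V, hw₁⟩ w₂ ⟨hw₂V, hw₂⟩
          have h₁ : h w₁ ∈ V ∩ dIter (ε / 2) (Metric.closedBall (0 : X) 1) α :=
            ⟨hw₁V, ih ⟨_, ⟨w₁, hw₁, rfl⟩, _, ⟨y, hy, rfl⟩, rfl⟩⟩
          have h₂ : h w₂ ∈ V ∩ dIter (ε / 2) (Metric.closedBall (0 : X) 1) α :=
            ⟨hw₂V, ih ⟨_, ⟨w₂, hw₂, rfl⟩, _, ⟨y, hy, rfl⟩, rfl⟩⟩
          have hd : dist (h w₁) (h w₂) = 2⁻¹ * dist w₁ w₂ := by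
            simp only [hh, dist_eq_norm]
            rw [show ((2⁻¹:ℝ) • w₁ + (2⁻¹:ℝ) • y) - ((2⁻¹:ℝ) • w₂ + (2⁻¹:ℝ) • y)
                = (2⁻¹:ℝ) • (w₁ - w₂) by rw [smul_sub]; abel]
            rw [norm_smul]
            norm_num
          have := Metric.dist_le_diam_of_mem
            ((Metric.isBounded_closedBall (x := (0 : X)) (r := 1)).subset
              (Set.inter_subset_right.trans (dIter_subset _ _ _))) h₁ h₂
          linarith
        calc Metric.diam _ ≤ 2 * Metric.diam (V ∩ dIter (ε / 2) (Metric.closedBall (0 : X) 1) α) :=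
              Metric.diam_le_of_forall_dist_le
                (by positivity) hbound
          _ < ε := by linarith
      exact hx.2 ⟨W, ⟨hWopen, hWdiam⟩, hzV⟩
  | limit α hα ih =>
    rw [dIter_limit _ _ hα, dIter_limit _ _ hα]
    rintro z ⟨_, ⟨x, hx, rfl⟩, _, ⟨y, hy, rfl⟩, rfl⟩
    simp only [Set.mem_iInter] at hx ⊢
    intro β hβ
    exact ih β hβ ⟨_, ⟨x, hx β hβ, rfl⟩, _, ⟨y, hy, rfl⟩, rfl⟩

end
end

section
/- If a Banach space X admits an equivalent norm that is asymptotically uniformly convex, then Φ(X) ≤ ω, where ω is the first infinite ordinal. -/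
open Metric Set Pointwise

noncomputable section

/-- The modulus of asymptotic uniform convexity `δ̄_X(t)`. -/
def aucMod (X : Type*) [NormedAddCommGroup X] [NormedSpace ℝ X] (t : ℝ) : ℝ :=
  ⨅ x : Metric.sphere (0 : X) 1,
    ⨆ Y : {Y : Submodule ℝ X // IsClosed (Y : Set X) ∧ FiniteDimensional ℝ (X ⧸ Y)},
      ⨅ y : Metric.sphere (0 : ↥Y.1) 1, (‖(x : X) + t • ((y : ↥Y.1) : X)‖ - 1)

/-- A normed space is asymptotically uniformly convex (AUC) if `δ̄_X(t) > 0` for all `t > 0`. -/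
def IsAUC (X : Type*) [NormedAddCommGroup X] [NormedSpace ℝ X] : Prop :=
  ∀ t : ℝ, 0 < t → 0 < aucMod X t

/-- `X` admits an equivalent asymptotically uniformly convex norm, i.e. it is isomorphic, as a
topological vector space, to an AUC normed space. -/
def AUCRenormable (X : Type u) [NormedAddCommGroup X] [NormedSpace ℝ X] : Prop :=
  ∃ (Y : Type u) (_ : NormedAddCommGroup Y) (_ : NormedSpace ℝ Y),
    Nonempty (X ≃L[ℝ] Y) ∧ IsAUC Y

/-! In an AUC space, fix `ε > 0` and a radius bound `R`. For a point `x` of `B_r` (`r ≤ R`) with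
`‖x‖` close to `r`, asymptotic uniform convexity gives a finite-codimensional subspace `Y` along
which every step of length at least `t ‖x‖` (with `t R = ε / 4`) pushes the norm up by a fixed
factor, hence out of `B_r`. The points weakly near `x` are close to `x + Y`, so the trace of such
a weak neighbourhood on `B_r` has diameter `< ε`, and `x ∉ σ_ε(B_r)`. Thus each derivation shrinks
`B_r` into `B_{r - δ}` for a `δ > 0` independent of `r`, and finitely many derivations empty
every bounded set. An isomorphism onto an AUC space carries derived sets into derived sets with
`ε` rescaled, so `Φ(X, ε)` is finite for every `ε`. -/

open Bornology
open scoped NNReal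

variable {E F : Type*} [NormedAddCommGroup E] [NormedSpace ℝ E]
  [NormedAddCommGroup F] [NormedSpace ℝ F]

lemma continuous_weakTop_dual (f : E →L[ℝ] ℝ) : @Continuous E ℝ (weakTop E) _ f :=
  continuous_iInf_dom continuous_induced_dom

lemma continuous_weakTop_weakTop (T : E →L[ℝ] F) :
    @Continuous E F (weakTop E) (weakTop F) T :=
  continuous_iInf_rng.2 fun f => continuous_induced_rng.2 (continuous_weakTop_dual (f.comp T))

lemma continuous_weakTop_of_finiteDimensional [FiniteDimensional ℝ F] (T : E →L[ℝ] F) :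
    @Continuous E F (weakTop E) _ T := by
  let b := Module.finBasis ℝ F
  have hcoord : ∀ j, @Continuous E ℝ (weakTop E) _ fun v => b.coord j (T v) := fun j =>
    continuous_weakTop_dual ((LinearMap.toContinuousLinearMap (b.coord j)).comp T)
  let _ := weakTop E
  have hT : ⇑T = fun v => ∑ j, b.coord j (T v) • b j := funext fun v => (b.sum_repr (T v)).symm
  rw [hT]
  exact continuous_finsetSum _ fun j _ => (hcoord j).smul continuous_const

lemma isWeaklyOpen_univ : IsWeaklyOpen (univ : Set E) := @isOpen_univ _ (weakTop E)

lemma IsWeaklyOpen.preimage (T : E →L[ℝ] F) {V : Set F} (hV : IsWeaklyOpen V) :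
    IsWeaklyOpen (T ⁻¹' V) :=
  @Continuous.isOpen_preimage _ _ (weakTop E) (weakTop F) T (continuous_weakTop_weakTop T) V hV

lemma IsOpen.isWeaklyOpen_preimage [FiniteDimensional ℝ F] (T : E →L[ℝ] F) {U : Set F}
    (hU : IsOpen U) : IsWeaklyOpen (T ⁻¹' U) :=
  @Continuous.isOpen_preimage _ _ (weakTop E) _ T (continuous_weakTop_of_finiteDimensional T) U hU

lemma exists_isWeaklyOpen_forall_exists_mem_norm_sub_lt {Y : Submodule ℝ E}
    (hY : IsClosed (Y : Set E)) [FiniteDimensional ℝ (E ⧸ Y)] (x : E) {θ : ℝ} (hθ : 0 < θ) :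
    ∃ V : Set E, IsWeaklyOpen V ∧ x ∈ V ∧ ∀ z ∈ V, ∃ y ∈ Y, ‖z - x - y‖ < θ := by
  -- `E ⧸ Y` is Hausdorff, as needed for linear maps on it to be continuous
  have := hY
  refine ⟨Y.mkQL ⁻¹' ball (Y.mkQL x) θ, isOpen_ball.isWeaklyOpen_preimage _,
    mem_ball_self hθ, fun z hz => ?_⟩
  rw [mem_preimage, mem_ball, dist_eq_norm, ← map_sub, Submodule.mkQL_apply,
    show ‖Y.mkQ (z - x)‖ = infDist (z - x) Y from QuotientAddGroup.norm_mk (z - x),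
    infDist_lt_iff ⟨0, Y.zero_mem⟩] at hz
  obtain ⟨y, hy, hzy⟩ := hz
  exact ⟨y, hy, by rwa [← dist_eq_norm]⟩

section DerivedSet

variable {ε : ℝ} {S S' : Set E}

lemma mem_dSet {x : E} :
    x ∈ dSet ε S ↔ x ∈ S ∧ ∀ V : Set E, IsWeaklyOpen V → x ∈ V → ε ≤ diam (V ∩ S) := by
  simp only [dSet, mem_sdiff, mem_sUnion, mem_ofPred_eq, not_exists, not_and]
  exact and_congr_right fun _ => forall_congr' fun V =>
    ⟨fun h hV hxV => not_lt.1 fun hd => h ⟨hV, hd⟩ hxV, fun h hVd hxV => (h hVd.1 hxV).not_gt hVd.2⟩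

lemma dSet_subset : dSet ε S ⊆ S := sdiff_subset

-- `Metric.diam` is `0` on unbounded sets, hence the boundedness hypotheses here and below.
lemma dSet_mono (hS' : IsBounded S') (h : S ⊆ S') : dSet ε S ⊆ dSet ε S' := fun x hx => by
  rw [mem_dSet] at hx ⊢
  exact ⟨h hx.1, fun V hV hxV => (hx.2 V hV hxV).trans
    (diam_mono (inter_subset_inter_right V h) (hS'.subset inter_subset_right))⟩

lemma dSet_eq_empty_of_diam_lt (h : diam S < ε) : dSet ε S = ∅ :=
  eq_empty_of_forall_notMem fun x hx =>
    (mem_dSet.1 hx).2 univ isWeaklyOpen_univ (mem_univ x) |>.not_gt (by rwa [univ_inter])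

lemma image_dSet_subset (T : E →L[ℝ] F) {K : ℝ≥0} (hT : AntilipschitzWith K T) {ε' : ℝ}
    (hε : K * ε' < ε) (hS : IsBounded (T '' S)) : T '' dSet ε S ⊆ dSet ε' (T '' S) := by
  rintro _ ⟨x, hx, rfl⟩
  rw [mem_dSet] at hx ⊢
  refine ⟨mem_image_of_mem T hx.1, fun V hV hxV => le_of_not_gt fun hd => ?_⟩
  have hdiam : diam (T ⁻¹' V ∩ S) ≤ K * diam (V ∩ T '' S) :=
    diam_le_of_forall_dist_le (by positivity) fun a ha b hb =>
      (hT.le_mul_dist a b).trans <| mul_le_mul_of_nonneg_left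
        (dist_le_diam_of_mem (hS.subset inter_subset_right) ⟨ha.1, mem_image_of_mem T ha.2⟩
          ⟨hb.1, mem_image_of_mem T hb.2⟩) K.2
  exact (hx.2 _ (hV.preimage T) hxV).not_gt
    (hdiam.trans_lt ((mul_le_mul_of_nonneg_left hd.le K.2).trans_lt hε))

lemma dIter_zero_s8 : dIter ε S 0 = S := by
  simp [dIter]

lemma dIter_natCast_succ (n : ℕ) : dIter ε S (n + 1 : ℕ) = dSet ε (dIter ε S n) := by
  rw [dIter, Nat.cast_succ, Ordinal.limitRecOn_add_one]
  rfl

lemma dIter_natCast_subset (n : ℕ) : dIter ε S n ⊆ S := by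
  induction n with
  | zero => rw [Nat.cast_zero, dIter_zero_s8]
  | succ n ih => rw [dIter_natCast_succ]; exact dSet_subset.trans ih

lemma dIter_natCast_mono (hS' : IsBounded S') (h : S ⊆ S') (n : ℕ) :
    dIter ε S n ⊆ dIter ε S' n := by
  induction n with
  | zero => rwa [Nat.cast_zero, dIter_zero_s8, dIter_zero_s8]
  | succ n ih =>
    rw [dIter_natCast_succ, dIter_natCast_succ]
    exact dSet_mono (hS'.subset (dIter_natCast_subset n)) ih

lemma image_dIter_subset (T : E →L[ℝ] F) {K : ℝ≥0} (hT : AntilipschitzWith K T) {ε' : ℝ}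
    (hε : K * ε' < ε) (hS : IsBounded (T '' S)) (n : ℕ) :
    T '' dIter ε S n ⊆ dIter ε' (T '' S) n := by
  induction n with
  | zero => rw [Nat.cast_zero, dIter_zero_s8, dIter_zero_s8]
  | succ n ih =>
    rw [dIter_natCast_succ, dIter_natCast_succ]
    exact (image_dSet_subset T hT hε (hS.subset (image_mono (dIter_natCast_subset n)))).trans
      (dSet_mono (hS.subset (dIter_natCast_subset n)) ih)

end DerivedSet

lemma norm_add_smul_sub_norm_mul_le (x y : E) {t s : ℝ} (ht : 0 < t) (hts : t ≤ s) :
    s * (‖x + t • y‖ - ‖x‖) ≤ t * (‖x + s • y‖ - ‖x‖) := by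
  have hs : 0 < s := ht.trans_le hts
  have h : s * ‖x + t • y‖ ≤ t * ‖x + s • y‖ + (s - t) * ‖x‖ :=
    calc s * ‖x + t • y‖ = ‖s • (x + t • y)‖ := by rw [norm_smul, Real.norm_of_nonneg hs.le]
      _ = ‖t • (x + s • y) + (s - t) • x‖ := by congr 1; module
      _ ≤ t * ‖x + s • y‖ + (s - t) * ‖x‖ := by
          refine (norm_add_le _ _).trans_eq ?_
          rw [norm_smul, norm_smul, Real.norm_of_nonneg ht.le, Real.norm_of_nonneg (by linarith)]
  linarith

lemma exists_submodule_lt_norm_add_smul {t c : ℝ} (hc : c < aucMod E t) {x : E} (hx : ‖x‖ = 1) :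
    ∃ Y : Submodule ℝ E, IsClosed (Y : Set E) ∧ FiniteDimensional ℝ (E ⧸ Y) ∧
      ∀ y ∈ Y, ‖y‖ = 1 → 1 + c < ‖x + t • y‖ := by
  -- Real `⨅` and `⨆` are `0` on empty or unbounded families; the lower bound `-1` rules this out.
  let ι := {Y : Submodule ℝ E // IsClosed (Y : Set E) ∧ FiniteDimensional ℝ (E ⧸ Y)}
  let G : E → ι → ℝ := fun x Y => ⨅ y : sphere (0 : Y.1) 1, (‖x + t • (y : E)‖ - 1)
  have hG : ∀ (v : E) (Y : ι), -1 ≤ G v Y := fun v Y =>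
    Real.le_iInf (fun y => by linarith [norm_nonneg (v + t • (y : E))]) (by norm_num)
  have hGbdd : ∀ (v : E) (Y : ι),
      BddBelow (range fun y : sphere (0 : Y.1) 1 => ‖v + t • (y : E)‖ - 1) :=
    fun v Y => ⟨-1, forall_mem_range.2 fun y => by linarith [norm_nonneg (v + t • (y : E))]⟩
  have htop : ι := ⟨⊤, by simp, by
    have : Subsingleton (E ⧸ (⊤ : Submodule ℝ E)) := Submodule.Quotient.subsingleton_iff.2 rfl
    infer_instance⟩
  have hsup : ∀ v, -1 ≤ ⨆ Y, G v Y := fun v => by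
    by_cases hb : BddAbove (range (G v))
    · exact le_ciSup_of_le hb htop (hG v htop)
    · rw [Real.iSup_of_not_bddAbove hb]
      norm_num
  have hcx : c < ⨆ Y, G x Y :=
    hc.trans_le (ciInf_le (f := fun x : sphere (0 : E) 1 => ⨆ Y, G x Y)
      ⟨-1, forall_mem_range.2 fun v => hsup v⟩ ⟨x, by simp [hx]⟩)
  have : Nonempty ι := ⟨htop⟩
  obtain ⟨Y, hY⟩ := exists_lt_of_lt_ciSup hcx
  refine ⟨Y.1, Y.2.1, Y.2.2, fun y hy hy1 => ?_⟩
  have := hY.trans_le (ciInf_le (hGbdd x Y) ⟨⟨y, hy⟩, by simpa using hy1⟩)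
  linarith

lemma exists_submodule_mul_norm_le_norm_add {t c : ℝ} (ht : 0 < t) (hc0 : 0 ≤ c)
    (hc : c < aucMod E t) {x : E} (hx : x ≠ 0) :
    ∃ Y : Submodule ℝ E, IsClosed (Y : Set E) ∧ FiniteDimensional ℝ (E ⧸ Y) ∧
      ∀ y ∈ Y, t * ‖x‖ ≤ ‖y‖ → (1 + c) * ‖x‖ ≤ ‖x + y‖ := by
  have hx0 : 0 < ‖x‖ := norm_pos_iff.2 hx
  have hunit : ∀ v : E, v ≠ 0 → ‖‖v‖⁻¹ • v‖ = 1 := fun v hv => by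
    rw [norm_smul, norm_inv, norm_norm, inv_mul_cancel₀ (norm_ne_zero_iff.2 hv)]
  obtain ⟨Y, hYc, hYf, hY⟩ := exists_submodule_lt_norm_add_smul hc (hunit x hx)
  refine ⟨Y, hYc, hYf, fun y hy hty => ?_⟩
  have hy0 : 0 < ‖y‖ := (mul_pos ht hx0).trans_le hty
  set s := ‖y‖ / ‖x‖
  have hts : t ≤ s := (le_div_iff₀ hx0).2 (by linarith)
  have hgrow := hY _ (Y.smul_mem ‖y‖⁻¹ hy) (hunit y (norm_pos_iff.1 hy0))
  have hslope := norm_add_smul_sub_norm_mul_le (‖x‖⁻¹ • x) (‖y‖⁻¹ • y) ht hts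
  rw [hunit x hx] at hslope
  have hxy : x + y = ‖x‖ • (‖x‖⁻¹ • x + s • ‖y‖⁻¹ • y) := by
    rw [smul_add, smul_smul, smul_smul, smul_smul, mul_inv_cancel₀ hx0.ne', one_smul]
    rw [show ‖x‖ * (‖y‖ / ‖x‖) * ‖y‖⁻¹ = 1 by field_simp, one_smul]
  rw [hxy, norm_smul, norm_norm, mul_comm]
  refine mul_le_mul_of_nonneg_left ?_ hx0.le
  nlinarith

section AUC

variable {ε : ℝ}

lemma dSet_closedBall_eq_empty (hε : 0 < ε) {r : ℝ} (hr : r < ε / 2) :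
    dSet ε (closedBall (0 : E) r) = ∅ := by
  refine dSet_eq_empty_of_diam_lt ?_
  rcases lt_or_ge r 0 with hr0 | hr0
  · rwa [closedBall_eq_empty.2 hr0, diam_empty]
  · linarith [diam_closedBall (x := (0 : E)) hr0]

lemma dSet_closedBall_subset (hE : IsAUC E) (hε : 0 < ε) {R : ℝ} (hR : 0 < R) :
    ∃ δ > 0, ∀ r ≤ R, dSet ε (closedBall (0 : E) r) ⊆ closedBall 0 (r - δ) := by
  obtain ⟨t, ht, htR⟩ : ∃ t > 0, t * R = ε / 4 := ⟨ε / (4 * R), by positivity, by field_simp⟩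
  obtain ⟨c, hc0, hc, hc1⟩ : ∃ c > 0, c < aucMod E t ∧ c ≤ 1 / 2 := by
    have := hE t ht
    exact ⟨min (aucMod E t) 1 / 2, by positivity, by linarith [min_le_left (aucMod E t) 1],
      by linarith [min_le_right (aucMod E t) 1]⟩
  have hεc : ε * c ≤ ε / 2 := by nlinarith
  refine ⟨ε * c / 8, by positivity, fun r hrR x hx => ?_⟩
  rcases lt_or_ge r (ε / 2) with hr | hr
  · simp [dSet_closedBall_eq_empty hε hr] at hx
  have hxr : ‖x‖ ≤ r := mem_closedBall_zero_iff.1 (dSet_subset hx)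
  rw [mem_closedBall_zero_iff]
  by_contra! hxδ
  have hx0 : x ≠ 0 := norm_pos_iff.1 (by linarith)
  obtain ⟨Y, hYc, hYf, hY⟩ := exists_submodule_mul_norm_le_norm_add ht hc0.le hc hx0
  obtain ⟨V, hV, hxV, hVY⟩ :=
    exists_isWeaklyOpen_forall_exists_mem_norm_sub_lt hYc x (by positivity : 0 < ε * c / 8)
  have hnear : V ∩ closedBall 0 r ⊆ closedBall x (ε / 4 + ε * c / 8) := by
    rintro z ⟨hzV, hzr⟩
    rw [mem_closedBall_zero_iff] at hzr
    obtain ⟨y, hyY, hzy⟩ := hVY z hzV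
    -- a step from `x` along `Y` of length at least `t ‖x‖` would leave `B_r`
    have hy : ‖y‖ < t * ‖x‖ := by
      by_contra! hty
      have hgrow := hY y hyY hty
      have : ‖x + y‖ ≤ ‖z‖ + ‖z - x - y‖ := by
        simpa [sub_sub, sub_sub_cancel] using norm_sub_le z (z - x - y)
      nlinarith [mul_lt_mul_of_pos_left hxδ hc0, mul_le_mul_of_nonneg_left hr hc0.le]
    have htx : t * ‖x‖ ≤ ε / 4 := calc
      t * ‖x‖ ≤ t * R := by gcongr; linarith
      _ = ε / 4 := htR
    rw [mem_closedBall, dist_eq_norm]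
    calc ‖z - x‖ = ‖(z - x - y) + y‖ := by rw [sub_add_cancel]
      _ ≤ ‖z - x - y‖ + ‖y‖ := norm_add_le _ _
      _ ≤ ε / 4 + ε * c / 8 := by linarith
  have hdiam : diam (V ∩ closedBall 0 r) < ε := by
    refine (diam_mono hnear isBounded_closedBall).trans_lt
      ((diam_closedBall (by positivity)).trans_lt (by linarith))
  exact ((mem_dSet.1 hx).2 V hV hxV).not_gt hdiam

lemma exists_dIter_closedBall_eq_empty (hE : IsAUC E) (hε : 0 < ε) {R : ℝ} (hR : 0 < R) :
    ∃ N : ℕ, dIter ε (closedBall (0 : E) R) N = ∅ := by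
  obtain ⟨δ, hδ, hshrink⟩ := dSet_closedBall_subset hE hε hR
  have hiter : ∀ n : ℕ, dIter ε (closedBall (0 : E) R) n ⊆ closedBall 0 (R - n * δ) := by
    intro n
    induction n with
    | zero => simp [dIter_zero_s8]
    | succ n ih =>
      rw [dIter_natCast_succ, Nat.cast_succ, add_mul, one_mul, ← sub_sub]
      exact (dSet_mono isBounded_closedBall ih).trans
        (hshrink _ (by linarith [mul_nonneg n.cast_nonneg hδ.le]))
  obtain ⟨N, hN⟩ := exists_nat_gt (R / δ)
  rw [div_lt_iff₀ hδ] at hN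
  exact ⟨N, subset_empty_iff.1 ((hiter N).trans (closedBall_eq_empty.2 (by linarith)).subset)⟩

lemma IsAUC.exists_dIter_eq_empty (hE : IsAUC E) (hε : 0 < ε) {S : Set E} (hS : IsBounded S) :
    ∃ N : ℕ, dIter ε S N = ∅ := by
  obtain ⟨R, hR, hSR⟩ := hS.subset_closedBall_lt 0 0
  obtain ⟨N, hN⟩ := exists_dIter_closedBall_eq_empty hE hε hR
  exact ⟨N, subset_empty_iff.1 (hN ▸ dIter_natCast_mono isBounded_closedBall hSR N)⟩

lemma AUCRenormable.exists_dIter_eq_empty (h : AUCRenormable E) (hε : 0 < ε) {S : Set E}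
    (hS : IsBounded S) : ∃ N : ℕ, dIter ε S N = ∅ := by
  obtain ⟨F, _, _, ⟨T⟩, hF⟩ := h
  set K := ‖(T.symm : F →L[ℝ] E)‖₊
  have hKε : K * (ε / (K + 1)) < ε := by
    rw [mul_div_assoc', div_lt_iff₀ (by positivity)]
    linarith
  obtain ⟨N, hN⟩ := hF.exists_dIter_eq_empty (ε := ε / (K + 1)) (by positivity)
    ((T : E →L[ℝ] F).lipschitz.isBounded_image hS)
  exact ⟨N, image_eq_empty.1 (subset_empty_iff.1
    (hN ▸ image_dIter_subset (T : E →L[ℝ] F) T.antilipschitz hKε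
      ((T : E →L[ℝ] F).lipschitz.isBounded_image hS) N))⟩

end AUC

lemma phiEps_le {X : Type*} [NormedAddCommGroup X] [NormedSpace ℝ X] {ε : ℝ} {γ : Ordinal}
    (h : dIter ε (closedBall (0 : X) 1) γ = ∅) : PhiEps X ε ≤ γ :=
  csInf_le' h

theorem phi_le_omega_of_aucRenormable_general (X : Type) [NormedAddCommGroup X] [NormedSpace ℝ X]
    (h : AUCRenormable X) :
    PhiDefined X ∧ Phi X ≤ Ordinal.omega0 := by
  have hball : ∀ ε > 0, ∃ N : ℕ, dIter ε (closedBall (0 : X) 1) N = ∅ := fun ε hε =>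
    h.exists_dIter_eq_empty hε isBounded_closedBall
  refine ⟨fun ε hε => ?_, ciSup_le' fun ε => ?_⟩
  · obtain ⟨N, hN⟩ := hball ε hε
    exact ⟨N, hN⟩
  · obtain ⟨N, hN⟩ := hball ε.1 ε.2
    exact (phiEps_le hN).trans (Ordinal.natCast_lt_omega0 N).le

/-- **Proposition 4.4.** If a Banach space admits an equivalent asymptotically uniformly
convex norm, then its weak-fragmentability index is at most `ω`. -/
theorem phi_le_omega_of_aucRenormable (X : Type) [NormedAddCommGroup X] [NormedSpace ℝ X]
    [CompleteSpace X] (h : AUCRenormable X) :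
    PhiDefined X ∧ Phi X ≤ Ordinal.omega0 :=
  phi_le_omega_of_aucRenormable_general X h
end
end
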